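/- In the quasi-normal local model, let γ : J∖B → ℝ × U × ℝ × ℝ^d be a generalized bicharacteristic whose image, together with all one-sided limits γ(S^±) for S ∈ B, is contained in a compact subset of ℝ × U × ℝ × ℝ^d. Then for every compact interval I contained in the interior of J, the family (H_pz(γ(S⁺)))_{S ∈ B∩I} is summable: ∑_{S ∈ B∩I} H_pz(γ(S⁺)) < ∞ (each term is positive since γ(S⁺) ∈ H_∂⁺; equivalently, the jumps of the ζ-component of γ at its reflection points in I form an absolutely convergent series). -/

import Mathlib

open MeasureTheory Filter Topology Set

noncomputable section

/-- Phase space `ℝ × ℝ^{d+1} × ℝ × ℝ^{d+1}`, points `ϱ = (t, x, τ, ξ)`. -/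
abbrev Phase (d : ℕ) : Type := ℝ × (Fin (d + 1) → ℝ) × ℝ × (Fin (d + 1) → ℝ)

/-- Boundary phase space `ℝ × ℝ^d × ℝ × ℝ^d`, points `ϱ' = (t, x', τ, ξ')`. -/
abbrev BPhase (d : ℕ) : Type := ℝ × (Fin d → ℝ) × ℝ × (Fin d → ℝ)

variable {d : ℕ}

/-- The quadratic form `⟨A ξ, ξ⟩`. -/
def qf (A : Fin (d + 1) → Fin (d + 1) → ℝ) (ξ : Fin (d + 1) → ℝ) : ℝ :=
  ∑ i, ∑ j, A i j * ξ i * ξ j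

variable (a : (Fin (d + 1) → ℝ) → Fin (d + 1) → Fin (d + 1) → ℝ)

/-- The principal symbol `p(ϱ) = -τ² + ⟨a(x)ξ, ξ⟩`. -/
def psymb (ϱ : Phase d) : ℝ := -ϱ.2.2.1 ^ 2 + qf (a ϱ.2.1) ϱ.2.2.2

/-- The Hamiltonian vector field of `p`. -/
def Hp (ϱ : Phase d) : Phase d :=
  (-(2 * ϱ.2.2.1),
    fun i => 2 * ∑ j, a ϱ.2.1 i j * ϱ.2.2.2 j,
    0,
    fun k => -(fderiv ℝ (fun y => qf (a y) ϱ.2.2.2) ϱ.2.1 (Pi.single k 1)))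

/-- `H_p z (ϱ) = 2 (a(x) ξ)_d`. -/
def Hpz (ϱ : Phase d) : ℝ := 2 * ∑ j, a ϱ.2.1 (Fin.last d) j * ϱ.2.2.2 j

/-- `H_p² z (ϱ) = d(H_p z)(ϱ)[H_p(ϱ)]`. -/
def Hp2z (ϱ : Phase d) : ℝ := fderiv ℝ (Hpz a) ϱ (Hp a ϱ)

/-- The `z`-component (last coordinate of `x`). -/
def zc (ϱ : Phase d) : ℝ := ϱ.2.1 (Fin.last d)

/-- The characteristic set `{p = 0}`. -/
def CharSet : Set (Phase d) := {ϱ | psymb a ϱ = 0}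

/-- Hyperbolic set `H_∂⁺`. -/
def Hplus : Set (Phase d) := {ϱ | zc ϱ = 0 ∧ psymb a ϱ = 0 ∧ 0 < Hpz a ϱ}

/-- Hyperbolic set `H_∂⁻`. -/
def Hminus : Set (Phase d) := {ϱ | zc ϱ = 0 ∧ psymb a ϱ = 0 ∧ Hpz a ϱ < 0}

/-- Glancing set `G_∂`. -/
def Gb : Set (Phase d) := {ϱ | zc ϱ = 0 ∧ psymb a ϱ = 0 ∧ Hpz a ϱ = 0}

/-- Diffractive set `G_∂^sd`. -/
def Gsd : Set (Phase d) := {ϱ | ϱ ∈ Gb a ∧ 0 < Hp2z a ϱ}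

/-- Order-three glancing set `G_∂^gl`. -/
def Ggl : Set (Phase d) := {ϱ | ϱ ∈ Gb a ∧ Hp2z a ϱ = 0}

/-- Gliding set `G_∂^sg`. -/
def Gsg : Set (Phase d) := {ϱ | ϱ ∈ Gb a ∧ Hp2z a ϱ < 0}

/-- `a` is a C¹ symmetric positive definite (inverse) metric on `U`. -/
def MetricHyp (U : Set (Fin (d + 1) → ℝ)) : Prop :=
  ContDiffOn ℝ 1 a U ∧ (∀ x ∈ U, ∀ i j, a x i j = a x j i) ∧
    ∀ x ∈ U, ∀ ξ : Fin (d + 1) → ℝ, ξ ≠ 0 → 0 < qf (a x) ξ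

/-- Quasi-normal coordinates at the boundary. -/
def QuasiNormal (U : Set (Fin (d + 1) → ℝ)) : Prop :=
  ∀ x ∈ U, x (Fin.last d) = 0 →
    (∀ j, j ≠ Fin.last d → a x (Fin.last d) j = 0) ∧ a x (Fin.last d) (Fin.last d) = 1

/-- The reflection `Σ`, flipping the sign of the `ζ`-component. -/
def reflζ (ϱ : Phase d) : Phase d :=
  (ϱ.1, ϱ.2.1, ϱ.2.2.1, Function.update ϱ.2.2.2 (Fin.last d) (-ϱ.2.2.2 (Fin.last d)))

/-- The coordinate unit vector in the `ζ`-direction. -/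
def eζ (d : ℕ) : Phase d := (0, 0, 0, Pi.single (Fin.last d) 1)

/-- The tangential projection `π_∥`. -/
def tproj (ϱ : Phase d) : Phase d :=
  (ϱ.1, ϱ.2.1, ϱ.2.2.1,
    Function.update ϱ.2.2.2 (Fin.last d)
      (ϱ.2.2.2 (Fin.last d) - Hpz a ϱ / (2 * a ϱ.2.1 (Fin.last d) (Fin.last d))))

/-- The gliding vector field `H_p^G`. -/
def HpG (ϱ : Phase d) : Phase d :=
  Hp a ϱ - (Hp2z a ϱ / (2 * a ϱ.2.1 (Fin.last d) (Fin.last d))) • eζ d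

/-- Extension of a boundary space point by `z = 0`. -/
def ext0 (x' : Fin d → ℝ) : Fin (d + 1) → ℝ := Fin.snoc x' 0

/-- Lift of a boundary phase point with prescribed `ζ`-component. -/
def liftB (ϱ' : BPhase d) (ζ : ℝ) : Phase d :=
  (ϱ'.1, ext0 ϱ'.2.1, ϱ'.2.2.1, Fin.snoc ϱ'.2.2.2 ζ)

/-- `r(ϱ') = τ² - ⟨a'(x')ξ', ξ'⟩`. -/
def rb (ϱ' : BPhase d) : ℝ :=
  ϱ'.2.2.1 ^ 2 - ∑ i : Fin d, ∑ j : Fin d,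
    a (ext0 ϱ'.2.1) (Fin.castSucc i) (Fin.castSucc j) * ϱ'.2.2.2 i * ϱ'.2.2.2 j

/-- The boundary integrand `Φq`. -/
def PhiFn (q : Phase d → ℝ) (ϱ' : BPhase d) : ℝ :=
  if 0 < rb a ϱ' then
    (q (liftB ϱ' (Real.sqrt (rb a ϱ'))) - q (liftB ϱ' (-Real.sqrt (rb a ϱ')))) /
      (2 * Real.sqrt (rb a ϱ'))
  else fderiv ℝ q (liftB ϱ' 0) (eζ d)

/-- The support of a measure: points all of whose open neighbourhoods have positive measure. -/
def msupp {α : Type*} [TopologicalSpace α] [MeasurableSpace α]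
    (μ : Measure α) : Set α :=
  {x | ∀ O : Set α, IsOpen O → x ∈ O → 0 < μ O}

/-- The boundary transport equation `ᵗH_p μ = f μ - ∫ (δ_{ϱ'⁺} - δ_{ϱ'⁻})/⟨ξ⁺-ξ⁻, n⟩ dν`. -/
def BTE (𝒰 : Set (Phase d)) (μ : Measure (Phase d)) (ν : Measure (BPhase d))
    (f : Phase d → ℝ) : Prop :=
  ∀ q : Phase d → ℝ, ContDiff ℝ 1 q → HasCompactSupport q → tsupport q ⊆ 𝒰 →
    ∫ ϱ, fderiv ℝ q ϱ (Hp a ϱ) ∂μ =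
      ∫ ϱ, f ϱ * q ϱ ∂μ - ∫ ϱ' in {ϱ' | 0 ≤ rb a ϱ'}, PhiFn a q ϱ' ∂ν

/-- Standing support assumptions:
`supp μ ⊆ Char p ∩ {z ≥ 0}` and `supp μ ∩ {(τ, ξ) = 0} = ∅`. -/
def StandingSupp (μ : Measure (Phase d)) : Prop :=
  msupp μ ⊆ CharSet a ∩ {ϱ | 0 ≤ zc ϱ} ∧
    ∀ ϱ ∈ msupp μ, ¬(ϱ.2.2.1 = 0 ∧ ϱ.2.2.2 = 0)

/-- `μ` is a nonnegative Radon measure on the open set `𝒰`. -/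
def RadonOn (𝒰 : Set (Phase d)) (μ : Measure (Phase d)) : Prop :=
  μ 𝒰ᶜ = 0 ∧ ∀ K : Set (Phase d), IsCompact K → K ⊆ 𝒰 → μ K < ⊤

/-- `ν` is a nonnegative Radon measure on the boundary phase space over `U`. -/
def BRadon (U : Set (Fin (d + 1) → ℝ)) (ν : Measure (BPhase d)) : Prop :=
  ν {ϱ' | ext0 ϱ'.2.1 ∉ U} = 0 ∧
    ∀ K : Set (BPhase d), IsCompact K → (∀ ϱ' ∈ K, ext0 ϱ'.2.1 ∈ U) → ν K < ⊤

/-- A bicharacteristic valued in `V`, defined on the interval `J`. -/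
def BicharOn (V : Set (Phase d)) (γ : ℝ → Phase d) (J : Set ℝ) : Prop :=
  J.OrdConnected ∧
    ∀ s ∈ J, γ s ∈ V ∧ psymb a (γ s) = 0 ∧ HasDerivWithinAt γ (Hp a (γ s)) J s

/-- A maximal bicharacteristic in `V`: it cannot be extended by a bicharacteristic in `V`. -/
def MaxBicharOn (V : Set (Phase d)) (γ : ℝ → Phase d) (J : Set ℝ) : Prop :=
  BicharOn a V γ J ∧
    ∀ (γ' : ℝ → Phase d) (J' : Set ℝ), BicharOn a V γ' J' → J ⊆ J' →
      (∀ s ∈ J, γ' s = γ s) → J' = J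

/-- A generalized bicharacteristic on `J ∖ B`. -/
structure IsGenBichar (J B : Set ℝ) (γ : ℝ → Phase d) : Prop where
  ordConn : J.OrdConnected
  subJ : B ⊆ J
  discr : ∀ S ∈ B, ∃ ε > 0, ∀ s ∈ B, |s - S| < ε → s = S
  memChar : ∀ s ∈ J \ B,
    psymb a (γ s) = 0 ∧ 0 ≤ zc (γ s) ∧ γ s ∉ Hplus a ∪ Hminus a
  derivHp : ∀ s ∈ J \ B, γ s ∉ Gsg a → HasDerivWithinAt γ (Hp a (γ s)) (J \ B) s
  derivHpG : ∀ s ∈ J \ B, γ s ∈ Gsg a → HasDerivWithinAt γ (HpG a (γ s)) (J \ B) s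
  posNear : ∀ S ∈ B, ∃ ε > 0, ∀ s ∈ (J \ B) ∩ Ioo (S - ε) (S + ε), 0 < zc (γ s)
  leftLim : ∀ S ∈ B, (∃ ε > 0, Icc (S - ε) S ⊆ J) →
    ∃ ϱm ∈ Hminus a, Tendsto γ (𝓝[(J \ B) ∩ Iio S] S) (𝓝 ϱm)
  rightLim : ∀ S ∈ B, (∃ ε > 0, Icc S (S + ε) ⊆ J) →
    ∃ ϱp ∈ Hplus a, Tendsto γ (𝓝[(J \ B) ∩ Ioi S] S) (𝓝 ϱp)
  reflect : ∀ S ∈ B, (∃ ε > 0, Icc (S - ε) (S + ε) ⊆ J) →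
    ∀ ϱm ϱp : Phase d,
      Tendsto γ (𝓝[(J \ B) ∩ Iio S] S) (𝓝 ϱm) →
      Tendsto γ (𝓝[(J \ B) ∩ Ioi S] S) (𝓝 ϱp) → ϱp = reflζ ϱm

/-- A broken bicharacteristic on `J ∖ B`. -/
structure IsBrokenBichar (J B : Set ℝ) (γ : ℝ → Phase d) : Prop where
  ordConn : J.OrdConnected
  subJ : B ⊆ J
  discr : ∀ S ∈ B, ∃ ε > 0, ∀ s ∈ B, |s - S| < ε → s = S
  memChar : ∀ s ∈ J \ B,
    psymb a (γ s) = 0 ∧ 0 ≤ zc (γ s) ∧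
      γ s ∉ Hplus a ∪ Hminus a ∪ Ggl a ∪ Gsg a
  derivHp : ∀ s ∈ J \ B, HasDerivWithinAt γ (Hp a (γ s)) (J \ B) s
  posNear : ∀ S ∈ B, ∃ ε > 0, ∀ s ∈ (J \ B) ∩ Ioo (S - ε) (S + ε), 0 < zc (γ s)
  leftLim : ∀ S ∈ B, (∃ ε > 0, Icc (S - ε) S ⊆ J) →
    ∃ ϱm ∈ Hminus a, Tendsto γ (𝓝[(J \ B) ∩ Iio S] S) (𝓝 ϱm)
  rightLim : ∀ S ∈ B, (∃ ε > 0, Icc S (S + ε) ⊆ J) →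
    ∃ ϱp ∈ Hplus a, Tendsto γ (𝓝[(J \ B) ∩ Ioi S] S) (𝓝 ϱp)
  reflect : ∀ S ∈ B, (∃ ε > 0, Icc (S - ε) (S + ε) ⊆ J) →
    ∀ ϱm ϱp : Phase d,
      Tendsto γ (𝓝[(J \ B) ∩ Iio S] S) (𝓝 ϱm) →
      Tendsto γ (𝓝[(J \ B) ∩ Ioi S] S) (𝓝 ϱp) → ϱp = reflζ ϱm

/-- The closure `γ̄` of a generalized bicharacteristic: its image together with its
one-sided limits at reflection points. -/
def genClosure (J B : Set ℝ) (γ : ℝ → Phase d) : Set (Phase d) :=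
  γ '' (J \ B) ∪
    {ϱ | ∃ S ∈ B,
      ((𝓝[(J \ B) ∩ Iio S] S).NeBot ∧ Tendsto γ (𝓝[(J \ B) ∩ Iio S] S) (𝓝 ϱ)) ∨
      ((𝓝[(J \ B) ∩ Ioi S] S).NeBot ∧ Tendsto γ (𝓝[(J \ B) ∩ Ioi S] S) (𝓝 ϱ))}

/-- A generalized bicharacteristic valued in `𝒰`. -/
def GenBicharIn (𝒰 : Set (Phase d)) (J B : Set ℝ) (γ : ℝ → Phase d) : Prop :=
  IsGenBichar a J B γ ∧ ∀ s ∈ J \ B, γ s ∈ 𝒰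

/-- A maximal generalized bicharacteristic in `𝒰`. -/
def MaxGenBicharIn (𝒰 : Set (Phase d)) (J B : Set ℝ) (γ : ℝ → Phase d) : Prop :=
  GenBicharIn a 𝒰 J B γ ∧
    ∀ (J' B' : Set ℝ) (γ' : ℝ → Phase d), GenBicharIn a 𝒰 J' B' γ' →
      J ⊆ J' → B' ∩ J = B → (∀ s ∈ J \ B, γ' s = γ s) → J' = J

/-!
Near a time `t ∉ B` the curve stays in a compact subset of `{x ∈ U}`, on which `|H_p² z| ≤ M`.
For reflection times `S < S'` near `t`, let `τ ∈ (S, S']` be the first reflection time after `S`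
(possibly an accumulation point of reflection times, where `z(γ(τ)) = 0` by continuity). On
`(S, τ)` the function `z ∘ γ` vanishes at both ends and has derivative `H_p z ∘ γ`, whose own
derivative is `H_p² z ∘ γ` off the gliding set and `0` on it, since `H_p^G` is tangent to
`{H_p z = 0}`. Rolle's theorem gives a zero of `H_p z ∘ γ` in `(S, τ)`, and the mean value theorem
then gives `H_p z(γ(S⁺)) ≤ M (S' - S)`. Summed over consecutive reflection times these bounds
telescope, so the partial sums are bounded near every point of `[c, e]`, and compactness of
`[c, e]` gives summability.
-/

theorem sum_le_mul_sub_add_of_le_mul_gap {F : Finset ℝ} {f : ℝ → ℝ} {M R t₀ t₁ : ℝ}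
    (hM : 0 ≤ M) (hR : 0 ≤ R) (ht : t₀ ≤ t₁) (hF : ∀ S ∈ F, S ∈ Icc t₀ t₁)
    (hgap : ∀ S ∈ F, ∀ S' ∈ F, S < S' → f S ≤ M * (S' - S)) (hfR : ∀ S ∈ F, f S ≤ R) :
    ∑ S ∈ F, f S ≤ M * (t₁ - t₀) + R := by
  classical
  induction F using Finset.induction_on_min generalizing t₀ with
  | empty => simpa using add_nonneg (mul_nonneg hM (sub_nonneg.2 ht)) hR
  | insert m F hmF ih =>
    have hm : m ∈ Icc t₀ t₁ := hF m (Finset.mem_insert_self m F)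
    rw [Finset.sum_insert fun h => (hmF m h).false]
    rcases F.eq_empty_or_nonempty with rfl | hne
    · simpa using hfR m (Finset.mem_insert_self m ∅)
        |>.trans (le_add_of_nonneg_left (mul_nonneg hM (sub_nonneg.2 ht)))
    set m' := F.min' hne
    have hm' : m' ∈ F := F.min'_mem hne
    have hfm : f m ≤ M * (m' - m) := hgap m (by simp) m' (by simp [hm']) (hmF m' hm')
    have hF' : ∑ S ∈ F, f S ≤ M * (t₁ - m') + R :=
      ih (hF m' (by simp [hm'])).2 (fun S hS => ⟨F.min'_le S hS, (hF S (by simp [hS])).2⟩)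
        (fun S hS S' hS' => hgap S (by simp [hS]) S' (by simp [hS']))
        (fun S hS => hfR S (by simp [hS]))
    nlinarith [hm.1]

theorem summable_of_forall_mem_nhds_sum_le {X : Type*} [TopologicalSpace X] {B K : Set X}
    (hK : IsCompact K) {g : X → ℝ} (hg : ∀ x ∈ B ∩ K, 0 ≤ g x)
    (hloc : ∀ x ∈ K, ∃ W ∈ 𝓝 x, ∃ C, ∀ F : Finset X, ↑F ⊆ B ∩ W → ∑ S ∈ F, g S ≤ C) :
    Summable fun S : ↥(B ∩ K) => g S := by
  classical
  choose! W hW C hC using hloc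
  obtain ⟨T, hTK, hcover⟩ := hK.elim_nhds_subcover W hW
  choose! sel hselT hsel using fun S (hS : S ∈ K) => by simpa using hcover hS
  have hbound : ∀ F : Finset X, ↑F ⊆ B ∩ K → ∑ S ∈ F, g S ≤ ∑ y ∈ T, C y := by
    intro F hF
    rw [← Finset.sum_fiberwise_of_maps_to (g := sel) fun S hS => hselT S (hF hS).2]
    refine Finset.sum_le_sum fun y hy => hC y (hTK y hy) _ fun S hS => ?_
    simp only [Finset.coe_filter, mem_ofPred_eq] at hS
    exact ⟨(hF hS.1).1, hS.2 ▸ hsel S (hF hS.1).2⟩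
  refine summable_of_sum_le (c := ∑ y ∈ T, C y) (fun S => hg S S.2) fun u => ?_
  have := hbound (u.map (Function.Embedding.subtype _)) fun S hS => by
    obtain ⟨S, -, rfl⟩ := Finset.mem_map.1 hS
    exact S.2
  rwa [Finset.sum_map] at this

theorem abs_le_mul_of_hasDerivAt_of_tendsto {z h h' : ℝ → ℝ} {S τ M L l : ℝ} (hSτ : S < τ)
    (hz : ∀ s ∈ Ioo S τ, HasDerivAt z (h s) s) (hh : ∀ s ∈ Ioo S τ, HasDerivAt h (h' s) s)
    (hM : ∀ s ∈ Ioo S τ, |h' s| ≤ M) (hzS : Tendsto z (𝓝[>] S) (𝓝 l))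
    (hzτ : Tendsto z (𝓝[<] τ) (𝓝 l)) (hL : Tendsto h (𝓝[>] S) (𝓝 L)) :
    |L| ≤ M * (τ - S) := by
  obtain ⟨ξ, hξ, hhξ⟩ := exists_hasDerivAt_eq_zero' hSτ hzS hzτ hz
  have hbound : ∀ s ∈ Ioo S τ, |h s| ≤ M * (τ - S) := fun s hs => by
    have := (convex_Ioo S τ).norm_image_sub_le_of_norm_hasDerivWithin_le
      (fun u hu => (hh u hu).hasDerivWithinAt) hM hξ hs
    simp only [Real.norm_eq_abs, hhξ, sub_zero] at this
    have hM0 : 0 ≤ M := (abs_nonneg _).trans (hM s hs)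
    calc |h s| ≤ M * |s - ξ| := this
      _ ≤ M * (τ - S) := by
        gcongr
        exact abs_sub_lt_iff.2 ⟨by linarith [hs.2, hξ.1], by linarith [hs.1, hξ.2]⟩ |>.le
  exact le_of_tendsto hL.abs (mem_of_superset (Ioo_mem_nhdsGT hSτ) hbound)

theorem ContinuousWithinAt.eq_of_mem_closure_of_mapClusterPt {X Y : Type*} [TopologicalSpace X]
    [TopologicalSpace Y] [T2Space Y] {φ : X → Y} {A P : Set X} {s : X} {y : Y}
    (hφ : ContinuousWithinAt φ A s) (hP : ∀ b ∈ P, MapClusterPt y (𝓝[A] b) φ)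
    (hs : s ∈ closure P) : φ s = y := by
  by_contra hne
  obtain ⟨Us, Uy, hUs, hUy, hsUs, hyUy, hdisj⟩ := t2_separation hne
  obtain ⟨O, hO, hsO, hOA⟩ := mem_nhdsWithin.1 (hφ (hUs.mem_nhds hsUs))
  obtain ⟨b, hbO, hbP⟩ := mem_closure_iff.1 hs O hO hsO
  have hev : ∀ᶠ u in 𝓝[A] b, φ u ∈ Us := mem_nhdsWithin.2 ⟨O, hO, hbO, hOA⟩
  obtain ⟨u, hUy, hUs⟩ :=
    ((mapClusterPt_iff_frequently.1 (hP b hbP) Uy (hUy.mem_nhds hyUy)).and_eventually hev).exists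
  exact hdisj.ne_of_mem hUs hUy rfl

theorem exists_Icc_subset_of_mem_nhds {J : Set ℝ} {t : ℝ} (h : J ∈ 𝓝 t) :
    ∃ ε > 0, Icc (t - ε) (t + ε) ⊆ J := by
  obtain ⟨ε, hε, hball⟩ := Metric.mem_nhds_iff.1 h
  refine ⟨ε / 2, half_pos hε, fun s hs => hball ?_⟩
  rw [← Real.closedBall_eq_Icc] at hs
  exact Metric.closedBall_subset_ball (half_lt_self hε) hs

theorem qf_pi_single (A : Fin (d + 1) → Fin (d + 1) → ℝ) (i : Fin (d + 1)) :
    qf A (Pi.single i 1) = A i i := by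
  simp [qf, Pi.single_apply]

theorem continuous_zc : Continuous (zc (d := d)) := by
  unfold zc
  fun_prop

theorem HasDerivAt.zc_comp {γ : ℝ → Phase d} {v : Phase d} {s : ℝ} (h : HasDerivAt γ v s) :
    HasDerivAt (fun u => zc (γ u)) (zc v) s := by
  have := ((ContinuousLinearMap.proj (Fin.last d)).comp ((ContinuousLinearMap.fst ℝ _ _).comp
    (ContinuousLinearMap.snd ℝ ℝ _))).hasFDerivAt.comp_hasDerivAt s h
  exact this

section Regularity

variable {U : Set (Fin (d + 1) → ℝ)}

theorem contDiffOn_Hpz (ha : ContDiffOn ℝ 1 a U) :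
    ContDiffOn ℝ 1 (Hpz a) {ϱ : Phase d | ϱ.2.1 ∈ U} := by
  have haϱ : ContDiffOn ℝ 1 (fun ϱ : Phase d => a ϱ.2.1) {ϱ | ϱ.2.1 ∈ U} :=
    ha.comp (by fun_prop) fun _ h => h
  have haij : ∀ i j, ContDiffOn ℝ 1 (fun ϱ : Phase d => a ϱ.2.1 i j) {ϱ | ϱ.2.1 ∈ U} :=
    fun i j => contDiffOn_pi.1 (contDiffOn_pi.1 haϱ i) j
  exact contDiffOn_const.mul (.sum fun j _ => (haij _ j).mul (by fun_prop))

theorem continuousOn_Hp (hU : IsOpen U) (ha : ContDiffOn ℝ 1 a U) :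
    ContinuousOn (Hp a) {ϱ : Phase d | ϱ.2.1 ∈ U} := by
  set F : (Fin (d + 1) → ℝ) × (Fin (d + 1) → ℝ) → ℝ := fun p => qf (a p.1) p.2
  have hF : ContDiffOn ℝ 1 F (U ×ˢ univ) := by
    have : ContDiffOn ℝ 1 (fun p : (Fin (d + 1) → ℝ) × (Fin (d + 1) → ℝ) => a p.1) (U ×ˢ univ) :=
      ha.comp (by fun_prop) fun _ h => h.1
    have haij : ∀ i j, ContDiffOn ℝ 1
        (fun p : (Fin (d + 1) → ℝ) × (Fin (d + 1) → ℝ) => a p.1 i j) (U ×ˢ univ) :=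
      fun i j => contDiffOn_pi.1 (contDiffOn_pi.1 this i) j
    exact .sum fun i _ => .sum fun j _ => ((haij i j).mul (by fun_prop)).mul (by fun_prop)
  have hUo : IsOpen (U ×ˢ (univ : Set (Fin (d + 1) → ℝ))) := hU.prod isOpen_univ
  have hpartial : ∀ ϱ : Phase d, ϱ.2.1 ∈ U → fderiv ℝ (fun y => qf (a y) ϱ.2.2.2) ϱ.2.1 =
      (fderiv ℝ F (ϱ.2.1, ϱ.2.2.2)).comp (ContinuousLinearMap.inl ℝ _ _) := fun ϱ h =>
    (((hF.differentiableOn one_ne_zero _ ⟨h, trivial⟩).differentiableAt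
      (hUo.mem_nhds ⟨h, trivial⟩)).hasFDerivAt.comp ϱ.2.1 (hasFDerivAt_prodMk_left _ _)).fderiv
  have hF' : ContinuousOn (fun ϱ : Phase d => fderiv ℝ F (ϱ.2.1, ϱ.2.2.2)) {ϱ | ϱ.2.1 ∈ U} :=
    (hF.continuousOn_fderiv_of_isOpen hUo le_rfl).comp (by fun_prop) fun _ h => ⟨h, trivial⟩
  have haϱ : ∀ i j, ContinuousOn (fun ϱ : Phase d => a ϱ.2.1 i j) {ϱ | ϱ.2.1 ∈ U} := fun i j =>
    continuousOn_pi.1 (continuousOn_pi.1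
      (ha.continuousOn.comp (f := fun ϱ : Phase d => ϱ.2.1) (by fun_prop) fun _ h => h) i) j
  refine ContinuousOn.congr (f := fun ϱ : Phase d => ((-(2 * ϱ.2.2.1),
    fun i => 2 * ∑ j, a ϱ.2.1 i j * ϱ.2.2.2 j, 0,
    fun k => -(fderiv ℝ F (ϱ.2.1, ϱ.2.2.2) (Pi.single k 1, 0))) : Phase d)) ?_ fun ϱ h => ?_
  · refine (by fun_prop : Continuous fun ϱ : Phase d => -(2 * ϱ.2.2.1)).continuousOn.prodMk
      (.prodMk (continuousOn_pi.2 fun i => ?_) (.prodMk continuousOn_const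
        (continuousOn_pi.2 fun k => ?_)))
    · exact continuousOn_const.mul (continuousOn_finsetSum _ fun j _ =>
        (haϱ i j).mul (by fun_prop))
    · exact (hF'.clm_apply continuousOn_const).neg
  · simp [Hp, hpartial ϱ h]

theorem continuousOn_Hp2z (hU : IsOpen U) (ha : ContDiffOn ℝ 1 a U) :
    ContinuousOn (Hp2z a) {ϱ : Phase d | ϱ.2.1 ∈ U} :=
  ((contDiffOn_Hpz a ha).continuousOn_fderiv_of_isOpen (hU.preimage (by fun_prop)) le_rfl).clm_apply
    (continuousOn_Hp a hU ha)

end Regularity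

theorem fderiv_Hpz_eζ {ϱ : Phase d} (h : DifferentiableAt ℝ (Hpz a) ϱ) :
    fderiv ℝ (Hpz a) ϱ (eζ d) = 2 * a ϱ.2.1 (Fin.last d) (Fin.last d) := by
  have hline : (fun t : ℝ => Hpz a (ϱ + t • eζ d)) =
      fun t => Hpz a ϱ + t * (2 * a ϱ.2.1 (Fin.last d) (Fin.last d)) := by
    funext t
    simp only [Hpz, eζ, Prod.smul_mk, smul_eq_mul, mul_zero, smul_zero, Prod.snd_add,
      Prod.fst_add, add_zero, Pi.add_apply, Pi.smul_apply, Pi.single_apply, mul_ite, mul_one,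
      mul_add, Finset.sum_add_distrib, Finset.sum_ite_eq', Finset.mem_univ, ↓reduceIte,
      add_right_inj]
    ring
  rw [← h.lineDeriv_eq_fderiv, lineDeriv, hline]
  simp

theorem fderiv_Hpz_HpG {ϱ : Phase d} (h : DifferentiableAt ℝ (Hpz a) ϱ)
    (hdd : a ϱ.2.1 (Fin.last d) (Fin.last d) ≠ 0) : fderiv ℝ (Hpz a) ϱ (HpG a ϱ) = 0 := by
  rw [HpG, map_sub, map_smul, fderiv_Hpz_eζ a h, smul_eq_mul, Hp2z]
  field_simp
  ring

open Classical in
def genHp (ϱ : Phase d) : Phase d := if ϱ ∈ Gsg a then HpG a ϱ else Hp a ϱ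

theorem zc_genHp (ϱ : Phase d) : zc (genHp a ϱ) = Hpz a ϱ := by
  unfold genHp
  split_ifs <;> simp [HpG, zc, Hp, Hpz, eζ]

theorem abs_fderiv_Hpz_genHp_le {ϱ : Phase d} (h : DifferentiableAt ℝ (Hpz a) ϱ)
    (hdd : a ϱ.2.1 (Fin.last d) (Fin.last d) ≠ 0) :
    |fderiv ℝ (Hpz a) ϱ (genHp a ϱ)| ≤ |Hp2z a ϱ| := by
  unfold genHp
  split_ifs
  · rw [fderiv_Hpz_HpG a h hdd, abs_zero]
    exact abs_nonneg _
  · rfl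

namespace IsGenBichar

variable {a} {J B : Set ℝ} {γ : ℝ → Phase d}

theorem diff_mem_nhdsNE (hγ : IsGenBichar a J B γ) {S : ℝ} (hS : S ∈ B) (hSJ : S ∈ interior J) :
    J \ B ∈ 𝓝[≠] S := by
  obtain ⟨ε, hε, hiso⟩ := hγ.discr S hS
  filter_upwards [nhdsWithin_le_nhds (inter_mem (Metric.ball_mem_nhds S hε)
    (isOpen_interior.mem_nhds hSJ)), self_mem_nhdsWithin] with s hs hne
  exact ⟨interior_subset hs.2, fun hsB => hne (hiso s hsB (by simpa [Real.dist_eq] using hs.1))⟩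

theorem nhdsWithin_diff_inter_Ioi (hγ : IsGenBichar a J B γ) {S : ℝ} (hS : S ∈ B)
    (hSJ : S ∈ interior J) : 𝓝[(J \ B) ∩ Ioi S] S = 𝓝[>] S :=
  nhdsWithin_inter_of_mem (nhdsWithin_mono S (fun _ h => ne_of_gt h) (hγ.diff_mem_nhdsNE hS hSJ))

theorem limUnder_nhdsGT_mem_Hplus (hγ : IsGenBichar a J B γ) {S : ℝ} (hS : S ∈ B)
    (hSJ : S ∈ interior J) :
    limUnder (𝓝[>] S) γ ∈ Hplus a ∧ Tendsto γ (𝓝[>] S) (𝓝 (limUnder (𝓝[>] S) γ)) := by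
  obtain ⟨ε, hε, hsub⟩ := exists_Icc_subset_of_mem_nhds (mem_interior_iff_mem_nhds.1 hSJ)
  obtain ⟨ϱp, hϱp, ht⟩ := hγ.rightLim S hS
    ⟨ε, hε, (Icc_subset_Icc_left (by linarith)).trans hsub⟩
  rw [hγ.nhdsWithin_diff_inter_Ioi hS hSJ] at ht
  rw [ht.limUnder_eq]
  exact ⟨hϱp, ht⟩

theorem exists_tendsto_nhdsLT (hγ : IsGenBichar a J B γ) {S : ℝ} (hS : S ∈ B)
    (hSJ : S ∈ interior J) : ∃ ϱm ∈ Hminus a, Tendsto γ (𝓝[<] S) (𝓝 ϱm) := by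
  obtain ⟨ε, hε, hsub⟩ := exists_Icc_subset_of_mem_nhds (mem_interior_iff_mem_nhds.1 hSJ)
  obtain ⟨ϱm, hϱm, ht⟩ := hγ.leftLim S hS
    ⟨ε, hε, (Icc_subset_Icc_right (by linarith)).trans hsub⟩
  rw [nhdsWithin_inter_of_mem (nhdsWithin_mono S (fun _ (h : _ ∈ Iio S) => ne_of_lt h)
    (hγ.diff_mem_nhdsNE hS hSJ))] at ht
  exact ⟨ϱm, hϱm, ht⟩

theorem continuousWithinAt (hγ : IsGenBichar a J B γ) {s : ℝ} (hs : s ∈ J \ B) :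
    ContinuousWithinAt γ (J \ B) s := by
  by_cases hG : γ s ∈ Gsg a
  · exact (hγ.derivHpG s hs hG).continuousWithinAt
  · exact (hγ.derivHp s hs hG).continuousWithinAt

theorem hasDerivAt (hγ : IsGenBichar a J B γ) {s : ℝ} (hs : J \ B ∈ 𝓝 s) :
    HasDerivAt γ (genHp a (γ s)) s := by
  unfold genHp
  split_ifs with hG
  · exact (hγ.derivHpG s (mem_of_mem_nhds hs) hG).hasDerivAt hs
  · exact (hγ.derivHp s (mem_of_mem_nhds hs) hG).hasDerivAt hs

theorem zc_eq_zero_of_mem_closure (hγ : IsGenBichar a J B γ) {s : ℝ} (hs : s ∈ J \ B)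
    (hcl : s ∈ closure (B ∩ interior J)) : zc (γ s) = 0 := by
  refine (continuous_zc.continuousAt.comp_continuousWithinAt (hγ.continuousWithinAt hs))
    |>.eq_of_mem_closure_of_mapClusterPt (fun b hb => ?_) hcl
  obtain ⟨hmem, ht⟩ := hγ.limUnder_nhdsGT_mem_Hplus hb.1 hb.2
  have hz := (continuous_zc.tendsto _).comp ht
  rw [hmem.1] at hz
  refine hz.mapClusterPt.mono ?_
  rw [← hγ.nhdsWithin_diff_inter_Ioi hb.1 hb.2]
  exact nhdsWithin_mono _ inter_subset_left

theorem exists_first_reflection (hγ : IsGenBichar a J B γ) {S S' : ℝ} (hS : S ∈ B) (hS' : S' ∈ B)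
    (hlt : S < S') (hJ : Icc S S' ⊆ interior J) :
    ∃ τ ∈ Ioc S S', Ioo S τ ⊆ J \ B ∧ Tendsto (fun u => zc (γ u)) (𝓝[<] τ) (𝓝 0) := by
  set P := B ∩ Ioc S S'
  have hP : P.Nonempty := ⟨S', hS', hlt, le_rfl⟩
  have hbdd : BddBelow P := ⟨S, fun b hb => hb.2.1.le⟩
  have hτS' : sInf P ≤ S' := csInf_le hbdd ⟨hS', hlt, le_rfl⟩
  obtain ⟨u, hSu, hu⟩ := mem_nhdsGT_iff_exists_Ioo_subset.1
    (nhdsWithin_mono S (fun _ h => ne_of_gt h) (hγ.diff_mem_nhdsNE hS (hJ ⟨le_rfl, hlt.le⟩)))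
  have huτ : u ≤ sInf P := le_csInf hP fun b hb => not_lt.1 fun h => (hu ⟨hb.2.1, h⟩).2 hb.1
  have hIoo : Ioo S (sInf P) ⊆ J \ B := fun s hs =>
    ⟨interior_subset (hJ ⟨hs.1.le, hs.2.le.trans hτS'⟩),
      fun hsB => (csInf_le hbdd ⟨hsB, hs.1, hs.2.le.trans hτS'⟩).not_gt hs.2⟩
  have hτJ : sInf P ∈ interior J := hJ ⟨(hSu.trans_le huτ).le, hτS'⟩
  refine ⟨sInf P, ⟨hSu.trans_le huτ, hτS'⟩, hIoo, ?_⟩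
  by_cases hτB : sInf P ∈ B
  · obtain ⟨ϱm, hϱm, ht⟩ := hγ.exists_tendsto_nhdsLT hτB hτJ
    have hz := (continuous_zc.tendsto ϱm).comp ht
    rwa [hϱm.1] at hz
  · have hτ : sInf P ∈ J \ B := ⟨interior_subset hτJ, hτB⟩
    have hz : zc (γ (sInf P)) = 0 := hγ.zc_eq_zero_of_mem_closure hτ
      (closure_mono (fun b (hb : b ∈ P) => show b ∈ B ∩ interior J from
        ⟨hb.1, hJ (Ioc_subset_Icc_self hb.2)⟩)
        (csInf_mem_closure hP hbdd))
    rw [← hz, ← nhdsWithin_Ioo_eq_nhdsLT (hSu.trans_le huτ)]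
    exact ((continuous_zc.continuousAt.comp_continuousWithinAt
      (hγ.continuousWithinAt hτ)).mono hIoo).tendsto

variable {U : Set (Fin (d + 1) → ℝ)}

theorem Hpz_limUnder_le_mul (hγ : IsGenBichar a J B γ) (hU : IsOpen U)
    (ha : ContDiffOn ℝ 1 a U) (hpos : ∀ x ∈ U, 0 < a x (Fin.last d) (Fin.last d))
    (hγU : ∀ s ∈ J \ B, (γ s).2.1 ∈ U) {S S' M : ℝ} (hS : S ∈ B) (hS' : S' ∈ B) (hlt : S < S')
    (hJ : Icc S S' ⊆ interior J) (hϱU : (limUnder (𝓝[>] S) γ).2.1 ∈ U) (hM0 : 0 ≤ M)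
    (hM : ∀ s ∈ Ioo S S' \ B, |Hp2z a (γ s)| ≤ M) :
    Hpz a (limUnder (𝓝[>] S) γ) ≤ M * (S' - S) := by
  obtain ⟨τ, hτ, hIoo, hzτ⟩ := hγ.exists_first_reflection hS hS' hlt hJ
  obtain ⟨hmem, ht⟩ := hγ.limUnder_nhdsGT_mem_Hplus hS (hJ ⟨le_rfl, hlt.le⟩)
  have hV : IsOpen {ϱ : Phase d | ϱ.2.1 ∈ U} := hU.preimage (by fun_prop)
  have hder : ∀ s ∈ Ioo S τ, HasDerivAt γ (genHp a (γ s)) s := fun s hs =>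
    hγ.hasDerivAt (mem_of_superset (isOpen_Ioo.mem_nhds hs) hIoo)
  have hdiff : ∀ ϱ : Phase d, ϱ.2.1 ∈ U → DifferentiableAt ℝ (Hpz a) ϱ := fun ϱ h =>
    ((contDiffOn_Hpz a ha).differentiableOn one_ne_zero ϱ h).differentiableAt (hV.mem_nhds h)
  have hzS : Tendsto (fun u => zc (γ u)) (𝓝[>] S) (𝓝 0) := by
    have hz := (continuous_zc.tendsto _).comp ht
    rwa [hmem.1] at hz
  have hbound := abs_le_mul_of_hasDerivAt_of_tendsto hτ.1 (h := fun u => Hpz a (γ u))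
    (fun s hs => zc_genHp a (γ s) ▸ (hder s hs).zc_comp)
    (fun s hs => (hdiff _ (hγU s (hIoo hs))).hasFDerivAt.comp_hasDerivAt s (hder s hs))
    (fun s hs => (abs_fderiv_Hpz_genHp_le a (hdiff _ (hγU s (hIoo hs)))
      (hpos _ (hγU s (hIoo hs))).ne').trans (hM s ⟨⟨hs.1, hs.2.trans_le hτ.2⟩, (hIoo hs).2⟩))
    hzS hzτ (((contDiffOn_Hpz a ha).continuousOn.continuousAt (hV.mem_nhds hϱU)).tendsto.comp ht)
  calc Hpz a (limUnder (𝓝[>] S) γ) ≤ M * (τ - S) := (le_abs_self _).trans hbound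
    _ ≤ M * (S' - S) := by gcongr; exact hτ.2

theorem limUnder_nhdsGT_mem (hγ : IsGenBichar a J B γ) {K : Set (Phase d)} (hK : IsClosed K)
    {S : ℝ} (hS : S ∈ B) (hSJ : S ∈ interior J) {W : Set ℝ} (hW : W ∈ 𝓝 S)
    (hγK : ∀ s ∈ W, s ∈ J \ B → γ s ∈ K) : limUnder (𝓝[>] S) γ ∈ K := by
  refine hK.mem_of_tendsto (hγ.limUnder_nhdsGT_mem_Hplus hS hSJ).2 ?_
  filter_upwards [nhdsWithin_le_nhds hW, nhdsWithin_mono S (fun _ h => ne_of_gt h)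
    (hγ.diff_mem_nhdsNE hS hSJ)] with s hsW hs
  exact hγK s hsW hs

theorem exists_nhds_sum_le_of_mem (hγ : IsGenBichar a J B γ) (f : ℝ → ℝ) {t : ℝ} (ht : t ∈ B)
    (htJ : t ∈ interior J) :
    ∃ W ∈ 𝓝 t, ∃ C, ∀ F : Finset ℝ, ↑F ⊆ B ∩ W → ∑ S ∈ F, f S ≤ C := by
  refine ⟨insert t (J \ B), insert_mem_nhds_iff.2 (hγ.diff_mem_nhdsNE ht htJ), max (f t) 0,
    fun F hF => ?_⟩
  have hFt : F ⊆ {t} := fun S hS => by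
    obtain ⟨hSB, rfl | hS'⟩ := hF hS
    · exact Finset.mem_singleton_self S
    · exact absurd hSB hS'.2
  rcases Finset.subset_singleton_iff.1 hFt with rfl | rfl <;> simp

theorem exists_nhds_sum_Hpz_le (hγ : IsGenBichar a J B γ) (hU : IsOpen U)
    (ha : ContDiffOn ℝ 1 a U) (hpos : ∀ x ∈ U, 0 < a x (Fin.last d) (Fin.last d))
    (hγU : ∀ s ∈ J \ B, (γ s).2.1 ∈ U) (hcpt : IsCompact (closure (γ '' (J \ B)))) {t : ℝ}
    (ht : t ∈ interior J) (htB : t ∉ B) :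
    ∃ W ∈ 𝓝 t, ∃ C, ∀ F : Finset ℝ, ↑F ⊆ B ∩ W →
      ∑ S ∈ F, Hpz a (limUnder (𝓝[>] S) γ) ≤ C := by
  have htJB : t ∈ J \ B := ⟨interior_subset ht, htB⟩
  obtain ⟨r, hr, hball⟩ := Metric.nhds_basis_closedBall.mem_iff.1 (hU.mem_nhds (hγU t htJB))
  have hx : Continuous fun ϱ : Phase d => ϱ.2.1 := by fun_prop
  set K := closure (γ '' (J \ B)) ∩ {ϱ | ϱ.2.1 ∈ Metric.closedBall (γ t).2.1 r}
  have hKc : IsCompact K := hcpt.inter_right (Metric.isClosed_closedBall.preimage hx)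
  have hKU : K ⊆ {ϱ | ϱ.2.1 ∈ U} := fun ϱ h => hball h.2
  obtain ⟨R, hR⟩ := hKc.exists_bound_of_continuousOn ((contDiffOn_Hpz a ha).continuousOn.mono hKU)
  obtain ⟨M, hM⟩ := hKc.exists_bound_of_continuousOn ((continuousOn_Hp2z a hU ha).mono hKU)
  have hnear : ∀ᶠ s in 𝓝 t, s ∈ interior J ∧ (s ∈ J \ B → γ s ∈ K) := by
    have hγx := (hx.continuousAt.comp_continuousWithinAt (hγ.continuousWithinAt htJB))
      (Metric.closedBall_mem_nhds _ hr)
    filter_upwards [isOpen_interior.mem_nhds ht, eventually_nhdsWithin_iff.1 hγx] with s hsJ hs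
    exact ⟨hsJ, fun h => ⟨subset_closure (mem_image_of_mem γ h), hs h⟩⟩
  obtain ⟨ε, hε, hsub⟩ := exists_Icc_subset_of_mem_nhds hnear
  refine ⟨Ioo (t - ε) (t + ε), Ioo_mem_nhds (by linarith) (by linarith),
    max M 0 * (t + ε - (t - ε)) + max R 0, fun F hF => ?_⟩
  have hK : ∀ S ∈ F, limUnder (𝓝[>] S) γ ∈ K := fun S hS =>
    hγ.limUnder_nhdsGT_mem hKc.isClosed (hF hS).1 (hsub (Ioo_subset_Icc_self (hF hS).2)).1
      (isOpen_Ioo.mem_nhds (hF hS).2) fun s hs => (hsub (Ioo_subset_Icc_self hs)).2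
  refine sum_le_mul_sub_add_of_le_mul_gap (le_max_right _ _) (le_max_right _ _) (by linarith)
    (fun S hS => Ioo_subset_Icc_self (hF hS).2) (fun S hS S' hS' hlt => ?_)
    fun S hS => (le_abs_self _).trans ((hR _ (hK S hS)).trans (le_max_left _ _))
  have hSS' : Icc S S' ⊆ Icc (t - ε) (t + ε) :=
    Icc_subset_Icc (hF hS).2.1.le (hF hS').2.2.le
  refine hγ.Hpz_limUnder_le_mul hU ha hpos hγU (hF hS).1 (hF hS').1 hlt
    (fun s hs => (hsub (hSS' hs)).1) (hKU (hK S hS)) (le_max_right _ _) fun s hs => ?_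
  exact (hM _ ((hsub (hSS' (Ioo_subset_Icc_self hs.1))).2
    ⟨interior_subset (hsub (hSS' (Ioo_subset_Icc_self hs.1))).1, hs.2⟩)).trans (le_max_left _ _)

end IsGenBichar

theorem stmt18 (U : Set (Fin (d + 1) → ℝ)) (hU : IsOpen U)
    (hmet : MetricHyp a U)
    (J B : Set ℝ) (γ : ℝ → Phase d)
    (hγ : IsGenBichar a J B γ)
    (hγU : ∀ s ∈ J \ B, (γ s).2.1 ∈ U)
    (hcpt : IsCompact (closure (γ '' (J \ B))))
    (c e : ℝ) (hI : Set.Icc c e ⊆ interior J) :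
    ∃ g : ℝ → ℝ,
      (∀ S ∈ B ∩ Set.Icc c e, ∃ ϱp ∈ Hplus a,
        Tendsto γ (𝓝[(J \ B) ∩ Set.Ioi S] S) (𝓝 ϱp) ∧ g S = Hpz a ϱp) ∧
      Summable (fun S : (B ∩ Set.Icc c e : Set ℝ) => g (S : ℝ)) := by
  obtain ⟨ha, -, hpd⟩ := hmet
  have hpos : ∀ x ∈ U, 0 < a x (Fin.last d) (Fin.last d) := fun x hx => by
    have := hpd x hx (Pi.single (Fin.last d) 1) (Pi.single_ne_zero_iff.2 one_ne_zero)
    rwa [qf_pi_single] at this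
  refine ⟨fun S => Hpz a (limUnder (𝓝[>] S) γ), fun S hS => ?_, ?_⟩
  · obtain ⟨hmem, ht⟩ := hγ.limUnder_nhdsGT_mem_Hplus hS.1 (hI hS.2)
    exact ⟨_, hmem, by rwa [hγ.nhdsWithin_diff_inter_Ioi hS.1 (hI hS.2)], rfl⟩
  refine summable_of_forall_mem_nhds_sum_le (g := fun S => Hpz a (limUnder (𝓝[>] S) γ))
    isCompact_Icc
    (fun S hS => (hγ.limUnder_nhdsGT_mem_Hplus hS.1 (hI hS.2)).1.2.2.le) fun t ht => ?_
  by_cases htB : t ∈ B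
  · exact hγ.exists_nhds_sum_le_of_mem _ htB (hI ht)
  · exact hγ.exists_nhds_sum_Hpz_le hU ha hpos hγU hcpt (hI ht) htB
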